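/- (MBO pinning) Let L_0^+ = D + A be the signless Laplacian and let λ_n be its largest eigenvalue. Let μ⁰ : V → {−1,1} be any binary function. If the diffusion time τ > 0 satisfies τ < λ_n^{-1} · log(1 + n^{-1/2}), then one iteration of the signless MBO scheme leaves μ⁰ unchanged: for every i ∈ V, thresholding the vector exp(−τ L_0^+) μ⁰ (assigning 1 where the entry is > 0 and −1 where it is ≤ 0) returns μ⁰_i. -/

import Mathlib

open Matrix

/-! The signless Laplacian `L = D + A` is positive semidefinite, since
`2 xᵀ L x = ∑ᵢⱼ ωᵢⱼ (xᵢ + xⱼ)²`, so its eigenvalues lie in `[0, λ]` and the spectral theorem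
bounds the operator 2-norm of `exp(-τL) - 1` by `max |e^{-τx} - 1| ≤ τλ` over these eigenvalues.
Every entry of `exp(-τL) μ - μ` is then at most `τλ ‖μ‖₂ = τλ √n` in size, and
`τλ < log(1 + n^{-1/2}) ≤ n^{-1/2}` makes this less than `1`, so thresholding recovers `μ`. -/

theorem Real.abs_exp_neg_sub_one_le {y : ℝ} (hy : 0 ≤ y) : |exp (-y) - 1| ≤ y := by
  rw [abs_sub_comm, abs_of_nonneg (sub_nonneg.2 (exp_le_one_iff.2 (neg_nonpos.2 hy)))]
  linarith [one_sub_le_exp_neg y]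

theorem mul_lt_of_lt_inv_mul_log_one_add {τ lam s : ℝ} (hτ : 0 ≤ τ) (hs : 0 < s)
    (h : τ < lam⁻¹ * Real.log (1 + s)) : τ * lam < s := by
  rcases le_or_gt lam 0 with hlam | hlam
  · nlinarith
  · calc τ * lam < Real.log (1 + s) := by rwa [← lt_inv_mul_iff₀' hlam]
      _ ≤ s := by linarith [Real.log_le_sub_one_of_pos (by linarith : 0 < 1 + s)]

theorem ite_pos_eq_of_abs_sub_lt_one {w μ : ℝ} (hμ : μ = -1 ∨ μ = 1) (h : |w - μ| < 1) :
    (if 0 < w then (1 : ℝ) else -1) = μ := by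
  rcases hμ with rfl | rfl <;> rw [abs_lt] at h
  · exact if_neg (by linarith)
  · exact if_pos (by linarith)

theorem EuclideanSpace.norm_toLp_of_forall_abs_eq_one {ι : Type*} [Fintype ι] {v : ι → ℝ}
    (hv : ∀ i, |v i| = 1) : ‖WithLp.toLp 2 v‖ = √(Fintype.card ι) := by
  simp [EuclideanSpace.norm_eq, hv]

namespace Matrix

variable {ι : Type*} [Fintype ι] [DecidableEq ι]

def signlessLaplacian (W : Matrix ι ι ℝ) : Matrix ι ι ℝ :=
  diagonal (fun i => ∑ j, W i j) + W

theorem two_mul_dotProduct_signlessLaplacian_mulVec {W : Matrix ι ι ℝ} (hW : W.IsSymm)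
    (x : ι → ℝ) :
    2 * (x ⬝ᵥ (W.signlessLaplacian *ᵥ x)) = ∑ i, ∑ j, W i j * (x i + x j) ^ 2 := by
  have hswap : ∑ i, ∑ j, W i j * x j ^ 2 = ∑ i, ∑ j, W i j * x i ^ 2 := by
    rw [Finset.sum_comm]
    simp_rw [hW.apply]
  have hsplit : ∀ i j, W i j * (x i + x j) ^ 2
      = W i j * x i ^ 2 + 2 * (x i * (W i j * x j)) + W i j * x j ^ 2 := fun i j => by ring
  have hdiag : ∀ i, x i * ((∑ j, W i j) * x i) = (∑ j, W i j) * x i ^ 2 := fun i => by ring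
  simp only [hsplit, Finset.sum_add_distrib, hswap, ← Finset.mul_sum, ← Finset.sum_mul]
  rw [signlessLaplacian, add_mulVec, dotProduct_add]
  simp only [dotProduct, mulVec, diagonal_apply, ite_mul, zero_mul, Finset.sum_ite_eq,
    Finset.mem_univ, if_true, hdiag]
  ring

theorem isHermitian_signlessLaplacian {W : Matrix ι ι ℝ} (hW : W.IsSymm) :
    W.signlessLaplacian.IsHermitian :=
  (isHermitian_diagonal_iff.2 fun _ => isSelfAdjoint_iff.2 rfl).add hW

theorem posSemidef_signlessLaplacian {W : Matrix ι ι ℝ} (hW : W.IsSymm)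
    (hW_nonneg : ∀ i j, 0 ≤ W i j) : W.signlessLaplacian.PosSemidef := by
  refine posSemidef_iff_dotProduct_mulVec.2 ⟨?_, fun x => ?_⟩
  · exact isHermitian_signlessLaplacian hW
  · have h := two_mul_dotProduct_signlessLaplacian_mulVec hW x
    have : 0 ≤ ∑ i, ∑ j, W i j * (x i + x j) ^ 2 := Finset.sum_nonneg fun i _ =>
      Finset.sum_nonneg fun j _ => mul_nonneg (hW_nonneg i j) (sq_nonneg _)
    simp only [star_trivial]
    linarith

theorem IsHermitian.eigenvalues_le {A : Matrix ι ι ℝ} (hA : A.IsHermitian) {lam : ℝ}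
    (h : ∀ (μ : ℝ) (v : ι → ℝ), v ≠ 0 → A *ᵥ v = μ • v → μ ≤ lam) (i : ι) :
    hA.eigenvalues i ≤ lam :=
  h _ _ (fun hv => hA.eigenvectorBasis.orthonormal.ne_zero i (by ext j; exact congrFun hv j))
    (hA.mulVec_eigenvectorBasis i)

section L2OpNorm

open scoped Matrix.Norms.L2Operator

theorem IsHermitian.norm_cfc_le {𝕜 : Type*} [RCLike 𝕜] {A : Matrix ι ι 𝕜} (hA : A.IsHermitian)
    {f : ℝ → ℝ} {c : ℝ} (hc : 0 ≤ c) (hf : ∀ i, |f (hA.eigenvalues i)| ≤ c) : ‖cfc f A‖ ≤ c := by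
  rw [hA.cfc_eq, IsHermitian.cfc, Unitary.conjStarAlgAut_apply, mul_assoc,
    CStarRing.norm_coe_unitary_mul,
    CStarRing.norm_mul_mem_unitary _ (Unitary.star_mem hA.eigenvectorUnitary.2),
    l2_opNorm_diagonal]
  exact (pi_norm_le_iff_of_nonneg hc).2 fun i => by simpa using hf i

theorem IsHermitian.exp_neg_smul_sub_one {A : Matrix ι ι ℝ} (hA : A.IsHermitian) (τ : ℝ) :
    NormedSpace.exp (-(τ • A)) - 1 = cfc (fun x => Real.exp (-(τ * x)) - 1) A := by
  have hA' : IsSelfAdjoint A := hA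
  rw [← CFC.real_exp_eq_normedSpace_exp, cfc_sub _ _ A, cfc_const_one ℝ A,
    ← cfc_comp_neg Real.exp (τ • A), ← cfc_comp_smul τ _ A]
  rfl

theorem abs_mulVec_apply_le (M : Matrix ι ι ℝ) (v : ι → ℝ) (i : ι) :
    |(M *ᵥ v) i| ≤ ‖M‖ * ‖WithLp.toLp 2 v‖ :=
  (PiLp.norm_apply_le (WithLp.toLp 2 (M *ᵥ v)) i).trans (l2_opNorm_mulVec M _)

theorem PosSemidef.abs_exp_neg_smul_mulVec_sub_le [Nonempty ι] {A : Matrix ι ι ℝ}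
    (hA : A.PosSemidef) {τ lam : ℝ} (hτ : 0 ≤ τ) (hlam : ∀ i, hA.isHermitian.eigenvalues i ≤ lam)
    (v : ι → ℝ) (i : ι) :
    |(NormedSpace.exp (-(τ • A)) *ᵥ v) i - v i| ≤ τ * lam * ‖WithLp.toLp 2 v‖ := by
  have hH := hA.isHermitian
  have hlam0 : 0 ≤ lam := (hA.eigenvalues_nonneg (Classical.arbitrary ι)).trans (hlam _)
  have hnorm : ‖NormedSpace.exp (-(τ • A)) - 1‖ ≤ τ * lam := by
    rw [hH.exp_neg_smul_sub_one]
    refine hH.norm_cfc_le (by positivity) fun k => ?_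
    calc _ ≤ τ * hH.eigenvalues k := Real.abs_exp_neg_sub_one_le
            (mul_nonneg hτ (hA.eigenvalues_nonneg k))
      _ ≤ τ * lam := by gcongr; exact hlam k
  calc |(NormedSpace.exp (-(τ • A)) *ᵥ v) i - v i|
      = |((NormedSpace.exp (-(τ • A)) - 1) *ᵥ v) i| := by rw [sub_mulVec, one_mulVec]; rfl
    _ ≤ ‖NormedSpace.exp (-(τ • A)) - 1‖ * ‖WithLp.toLp 2 v‖ := abs_mulVec_apply_le _ _ _
    _ ≤ τ * lam * ‖WithLp.toLp 2 v‖ := by gcongr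

end L2OpNorm

end Matrix

theorem signlessMBO_pinning_general
    (n : ℕ) (ω : Fin n → Fin n → ℝ)
    (hsymm : ∀ i j, ω i j = ω j i) (hnonneg : ∀ i j, 0 ≤ ω i j)
    (d : Fin n → ℝ) (hd : ∀ i, d i = ∑ j, ω i j)
    (A : Matrix (Fin n) (Fin n) ℝ) (hA : ∀ i j, A i j = ω i j)
    (L₀p : Matrix (Fin n) (Fin n) ℝ) (hL₀p : L₀p = Matrix.diagonal d + A)
    (lam : ℝ)
    (hlam_max : ∀ (μ : ℝ) (v : Fin n → ℝ), v ≠ 0 → L₀p *ᵥ v = μ • v → μ ≤ lam)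
    (μ₀ : Fin n → ℝ) (hμ₀ : ∀ i, μ₀ i = -1 ∨ μ₀ i = 1)
    (τ : ℝ) (hτpos : 0 < τ)
    (hτ : τ < lam⁻¹ * Real.log (1 + ((n : ℝ)) ^ (-(1 : ℝ) / 2))) :
    ∀ i, (if 0 < (NormedSpace.exp (-(τ • L₀p)) *ᵥ μ₀) i then (1 : ℝ) else -1)
      = μ₀ i := by
  intro i
  have : Nonempty (Fin n) := ⟨i⟩
  have hA_symm : A.IsSymm := by ext j k; rw [transpose_apply, hA, hA, hsymm]
  have hL : L₀p = A.signlessLaplacian := by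
    rw [hL₀p, signlessLaplacian]
    congr 2 with j
    simp only [hd, hA]
  have hPSD : L₀p.PosSemidef :=
    hL ▸ posSemidef_signlessLaplacian hA_symm fun j k => hA j k ▸ hnonneg j k
  have hdev := hPSD.abs_exp_neg_smul_mulVec_sub_le hτpos.le
    (hPSD.isHermitian.eigenvalues_le hlam_max) μ₀ i
  have hsmall : τ * lam * √n < 1 := by
    have hn : 0 < √(n : ℝ) := Real.sqrt_pos.2 (by exact_mod_cast i.pos)
    rw [neg_div, Real.rpow_neg (Nat.cast_nonneg n), ← Real.sqrt_eq_rpow] at hτ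
    have h := mul_lt_of_lt_inv_mul_log_one_add hτpos.le (inv_pos.2 hn) hτ
    calc τ * lam * √n < (√n)⁻¹ * √n := by gcongr
      _ = 1 := inv_mul_cancel₀ hn.ne'
  have hμ₀_abs : ∀ j, |μ₀ j| = 1 := fun j => by rcases hμ₀ j with h | h <;> simp [h]
  refine ite_pos_eq_of_abs_sub_lt_one (hμ₀ i) (hdev.trans_lt ?_)
  rwa [EuclideanSpace.norm_toLp_of_forall_abs_eq_one hμ₀_abs, Fintype.card_fin]

/-- MBO pinning: if the diffusion time `τ` satisfies `τ < λ_n⁻¹ log(1 + n^{-1/2})`, where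
`λ_n` is the largest eigenvalue of the signless Laplacian `L₀⁺ = D + A`, then one
iteration of the signless MBO scheme (diffusion by `exp(-τ L₀⁺)` followed by
thresholding) leaves any binary `μ⁰ : V → {-1,1}` unchanged. -/
theorem signlessMBO_pinning
    (n : ℕ) (hn : 1 ≤ n) (ω : Fin n → Fin n → ℝ)
    (hsymm : ∀ i j, ω i j = ω j i) (hnonneg : ∀ i j, 0 ≤ ω i j)
    (hdiag : ∀ i, ω i i = 0)
    (d : Fin n → ℝ) (hd : ∀ i, d i = ∑ j, ω i j) (hdpos : ∀ i, 0 < d i)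
    (A : Matrix (Fin n) (Fin n) ℝ) (hA : ∀ i j, A i j = ω i j)
    (L₀p : Matrix (Fin n) (Fin n) ℝ) (hL₀p : L₀p = Matrix.diagonal d + A)
    (lam : ℝ)
    (hlam_eig : ∃ v : Fin n → ℝ, v ≠ 0 ∧ L₀p *ᵥ v = lam • v)
    (hlam_max : ∀ (μ : ℝ) (v : Fin n → ℝ), v ≠ 0 → L₀p *ᵥ v = μ • v → μ ≤ lam)
    (μ₀ : Fin n → ℝ) (hμ₀ : ∀ i, μ₀ i = -1 ∨ μ₀ i = 1)
    (τ : ℝ) (hτpos : 0 < τ)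
    (hτ : τ < lam⁻¹ * Real.log (1 + ((n : ℝ)) ^ (-(1 : ℝ) / 2))) :
    ∀ i, (if 0 < (NormedSpace.exp (-(τ • L₀p)) *ᵥ μ₀) i then (1 : ℝ) else -1)
      = μ₀ i :=
  signlessMBO_pinning_general n ω hsymm hnonneg d hd A hA L₀p hL₀p lam hlam_max μ₀ hμ₀ τ hτpos hτ
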